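/- arXiv:1410.1132 — 2 statements merged into one kernel-verified Lean document; each statement's English description precedes it below -/
import Mathlib

section
/- Let (η_k)_{k=1}^{n} be a sequence of nonnegative reals with η_1 = 0, and let h_k = β^{-(k-1)} h_1 for a real β ≥ 2 and h_1 > 0. Suppose there is a constant C > 0 with C H β² < 1 (for some H > 0) such that η_{k+1} ≤ C H (h_k² + η_k) for all 1 ≤ k ≤ n-1. Then η_n ≤ (C H β²)/(1 - C H β²) · h_n². -/
/-- Recursive error accumulation estimate in the convergence proof of the
multilevel correction method. -/
theorem multilevel_error_recursion
    (n : ℕ) (hn : 1 ≤ n)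
    (η h : ℕ → ℝ) (β C H : ℝ)
    (hβ : 2 ≤ β) (hh1 : 0 < h 1)
    (hh : ∀ k, 1 ≤ k → h k = h 1 / β ^ (k - 1))
    (hηnonneg : ∀ k, 0 ≤ η k)
    (hη1 : η 1 = 0)
    (hC : 0 < C) (hH : 0 < H)
    (hsmall : C * H * β ^ 2 < 1)
    (hrec : ∀ k, 1 ≤ k → k ≤ n - 1 → η (k + 1) ≤ C * H * ((h k) ^ 2 + η k)) :
    η n ≤ (C * H * β ^ 2) / (1 - C * H * β ^ 2) * (h n) ^ 2 := by
  have hβ0 : (0:ℝ) < β := lt_of_lt_of_le two_pos hβ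
  set q : ℝ := C * H * β ^ 2 with hq
  have hq0 : 0 < q := by positivity
  have hq1 : 0 < 1 - q := by linarith
  have hCH : 0 < C * H := by positivity
  -- key: h k = β * h (k+1) for k ≥ 1
  have hstep : ∀ k, 1 ≤ k → h k = β * h (k + 1) := by
    intro k hk
    rw [hh k hk, hh (k + 1) (by omega)]
    have h1 : (k + 1) - 1 = (k - 1) + 1 := by omega
    rw [h1, pow_succ]
    field_simp
  have main : ∀ k, 1 ≤ k → k ≤ n → η k ≤ q / (1 - q) * (h k) ^ 2 := by
    intro k
    induction k with
    | zero => omega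
    | succ m ih =>
      intro hk1 hkn
      rcases Nat.eq_or_lt_of_le hk1 with h1 | h1
      · have : m + 1 = 1 := h1.symm
        rw [this, hη1]
        positivity
      · have hm1 : 1 ≤ m := by omega
        have hmn : m ≤ n - 1 := by omega
        have ihm := ih hm1 (by omega)
        have hr := hrec m hm1 hmn
        have hhm : h m = β * h (m + 1) := hstep m hm1
        have calc1 : η (m + 1) ≤ C * H * ((h m) ^ 2 + q / (1 - q) * (h m) ^ 2) := by
          have := hηnonneg m
          nlinarith
        have calc2 : C * H * ((h m) ^ 2 + q / (1 - q) * (h m) ^ 2)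
            = C * H / (1 - q) * (h m) ^ 2 := by
          field_simp
          ring
        rw [calc2, hhm] at calc1
        calc η (m + 1) ≤ C * H / (1 - q) * (β * h (m + 1)) ^ 2 := calc1
          _ = q / (1 - q) * (h (m + 1)) ^ 2 := by rw [hq]; ring
  exact main n hn le_rfl
end

section
/- Let V ⊆ H be Hilbert spaces with bounded embedding, a : V × V → ℝ a continuous coercive bilinear form, and φ' : H → H a map with ⟨φ'(y) w, w⟩ ≥ 0 (monotone, nonnegative multiplication operator). Suppose p₁, p₂ ∈ V satisfy a(v, p₁) + ⟨φ'(y₁) p₁, v⟩ = ⟨y₁ - y_d, v⟩ and a(v, p₂) + ⟨φ'(y₂) p₂, v⟩ = ⟨y₂ - y_d, v⟩ for all v ∈ V, and that ‖(φ'(y₁) - φ'(y₂)) p₁‖_{H} ≤ L ‖y₁ - y₂‖_H for some L ≥ 0. Then ‖p₁ - p₂‖_V ≤ C(1 + L) ‖y₁ - y₂‖_H for a constant C depending only on the coercivity and embedding constants. -/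
/-!
The difference `q = p₁ - p₂` solves the adjoint equation linearized at `y₂`, with right-hand
side `(y₁ - y₂) - (Φ y₁ - Φ y₂) (e p₁)`. Testing that equation with `q` itself, coercivity of `a`
and monotonicity of `Φ y₂` give `c₀ ‖q‖² ≤ ‖rhs‖ ‖e q‖ ≤ ce ‖rhs‖ ‖q‖`, and the Lipschitz bound on
`Φ` bounds the right-hand side by `(1 + L) ‖y₁ - y₂‖`.
-/

open scoped RealInnerProductSpace

section

variable {V H : Type*} [NormedAddCommGroup V] [NormedSpace ℝ V]
  [NormedAddCommGroup H] [InnerProductSpace ℝ H]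

/-- `p` is a weak solution of `A* p + B p = g`, where `a` is the form of `A` and `e : V → H` the
embedding. -/
def IsWeakSolution (a : V →L[ℝ] V →L[ℝ] ℝ) (e : V →L[ℝ] H) (B : H →L[ℝ] H) (g : H) (p : V) :
    Prop :=
  ∀ v : V, a v p + ⟪B (e p), e v⟫ = ⟪g, e v⟫

namespace IsWeakSolution

variable {a : V →L[ℝ] V →L[ℝ] ℝ} {e : V →L[ℝ] H}

theorem sub {B₁ B₂ : H →L[ℝ] H} {g₁ g₂ : H} {p₁ p₂ : V}
    (h₁ : IsWeakSolution a e B₁ g₁ p₁) (h₂ : IsWeakSolution a e B₂ g₂ p₂) :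
    IsWeakSolution a e B₂ (g₁ - g₂ - (B₁ - B₂) (e p₁)) (p₁ - p₂) := by
  intro v
  simp only [map_sub, sub_apply, inner_sub_left]
  linarith [h₁ v, h₂ v]

theorem norm_le {B : H →L[ℝ] H} {g : H} {p : V} {ce c₀ : ℝ} (hce : 0 ≤ ce)
    (hemb : ∀ v : V, ‖e v‖ ≤ ce * ‖v‖) (hc₀ : 0 < c₀) (hcoer : ∀ x : V, c₀ * ‖x‖ ^ 2 ≤ a x x)
    (hB : ∀ w : H, 0 ≤ ⟪B w, w⟫) (h : IsWeakSolution a e B g p) :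
    ‖p‖ ≤ ce / c₀ * ‖g‖ := by
  have energy : c₀ * ‖p‖ * ‖p‖ ≤ ce * ‖g‖ * ‖p‖ :=
    calc c₀ * ‖p‖ * ‖p‖ = c₀ * ‖p‖ ^ 2 := by ring
      _ ≤ a p p := hcoer p
      _ ≤ a p p + ⟪B (e p), e p⟫ := le_add_of_nonneg_right (hB _)
      _ = ⟪g, e p⟫ := h p
      _ ≤ ‖g‖ * ‖e p‖ := real_inner_le_norm _ _
      _ ≤ ‖g‖ * (ce * ‖p‖) := by gcongr; exact hemb p
      _ = ce * ‖g‖ * ‖p‖ := by ring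
  rcases (norm_nonneg p).eq_or_lt with hp | hp
  · rw [← hp]
    positivity
  · rw [div_mul_eq_mul_div, le_div_iff₀ hc₀, mul_comm]
    exact le_of_mul_le_mul_right energy hp

end IsWeakSolution

end

theorem adjoint_stability_semilinear_general
    {V H : Type*} [NormedAddCommGroup V] [InnerProductSpace ℝ V]
    [NormedAddCommGroup H] [InnerProductSpace ℝ H]
    (e : V →L[ℝ] H) (ce : ℝ) (hce : 0 < ce)
    (hemb : ∀ v : V, ‖e v‖ ≤ ce * ‖v‖)
    (a : V →L[ℝ] V →L[ℝ] ℝ) (c₀ : ℝ) (hc₀ : 0 < c₀)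
    (hcoer : ∀ x : V, c₀ * ‖x‖ ^ 2 ≤ a x x)
    (Φ : H → H →L[ℝ] H)
    (hΦpos : ∀ y w : H, 0 ≤ (inner ℝ (Φ y w) w : ℝ)) :
    ∃ C : ℝ, 0 < C ∧
      ∀ (y₁ y₂ yd : H) (p₁ p₂ : V) (L : ℝ), 0 ≤ L →
        (∀ v : V, a v p₁ + inner ℝ (Φ y₁ (e p₁)) (e v) = (inner ℝ (y₁ - yd) (e v) : ℝ)) →
        (∀ v : V, a v p₂ + inner ℝ (Φ y₂ (e p₂)) (e v) = (inner ℝ (y₂ - yd) (e v) : ℝ)) →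
        ‖Φ y₁ (e p₁) - Φ y₂ (e p₁)‖ ≤ L * ‖y₁ - y₂‖ →
        ‖p₁ - p₂‖ ≤ C * (1 + L) * ‖y₁ - y₂‖ := by
  refine ⟨ce / c₀, div_pos hce hc₀, fun y₁ y₂ yd p₁ p₂ L _ h₁ h₂ hlip => ?_⟩
  have hdiff : IsWeakSolution a e (Φ y₂) (y₁ - yd - (y₂ - yd) - (Φ y₁ - Φ y₂) (e p₁))
      (p₁ - p₂) := IsWeakSolution.sub h₁ h₂
  have hrhs : ‖y₁ - yd - (y₂ - yd) - (Φ y₁ - Φ y₂) (e p₁)‖ ≤ (1 + L) * ‖y₁ - y₂‖ := by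
    rw [sub_sub_sub_cancel_right, sub_apply]
    linarith [norm_sub_le (y₁ - y₂) (Φ y₁ (e p₁) - Φ y₂ (e p₁))]
  calc ‖p₁ - p₂‖ ≤ ce / c₀ * ‖y₁ - yd - (y₂ - yd) - (Φ y₁ - Φ y₂) (e p₁)‖ :=
        hdiff.norm_le hce.le hemb hc₀ hcoer (hΦpos y₂)
    _ ≤ ce / c₀ * ((1 + L) * ‖y₁ - y₂‖) := by gcongr
    _ = ce / c₀ * (1 + L) * ‖y₁ - y₂‖ := by ring

/-- Stability of the semilinear adjoint equation with respect to perturbations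
of the state. -/
theorem adjoint_stability_semilinear
    {V H : Type*} [NormedAddCommGroup V] [InnerProductSpace ℝ V]
    [NormedAddCommGroup H] [InnerProductSpace ℝ H]
    (e : V →L[ℝ] H) (ce : ℝ) (hce : 0 < ce)
    (hemb : ∀ v : V, ‖e v‖ ≤ ce * ‖v‖)
    (a : V →L[ℝ] V →L[ℝ] ℝ) (M c₀ : ℝ) (hc₀ : 0 < c₀)
    (hbound : ∀ x y : V, |a x y| ≤ M * ‖x‖ * ‖y‖)
    (hcoer : ∀ x : V, c₀ * ‖x‖ ^ 2 ≤ a x x)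
    (Φ : H → H →L[ℝ] H)
    (hΦpos : ∀ y w : H, 0 ≤ (inner ℝ (Φ y w) w : ℝ)) :
    ∃ C : ℝ, 0 < C ∧
      ∀ (y₁ y₂ yd : H) (p₁ p₂ : V) (L : ℝ), 0 ≤ L →
        (∀ v : V, a v p₁ + inner ℝ (Φ y₁ (e p₁)) (e v) = (inner ℝ (y₁ - yd) (e v) : ℝ)) →
        (∀ v : V, a v p₂ + inner ℝ (Φ y₂ (e p₂)) (e v) = (inner ℝ (y₂ - yd) (e v) : ℝ)) →
        ‖Φ y₁ (e p₁) - Φ y₂ (e p₁)‖ ≤ L * ‖y₁ - y₂‖ →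
        ‖p₁ - p₂‖ ≤ C * (1 + L) * ‖y₁ - y₂‖ :=
  adjoint_stability_semilinear_general e ce hce hemb a c₀ hc₀ hcoer Φ hΦpos
end
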